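/- arXiv:2602.22651 — 4 statements merged into one kernel-verified Lean document; each statement's English description precedes it below -/
import Mathlib

section
/- Let F be a completely positive trace-preserving map on operators of a finite-dimensional Hilbert space. If F is unital, i.e., F(𝟙) = 𝟙, then for every density matrix ρ, the von Neumann entropy satisfies S(F(ρ)) ≥ S(ρ). -/
/-!
Let `p` and `q` be the eigenvalues of `ρ` and of `Φ ρ = ∑ₐ Kₐ ρ Kₐᴴ`, with eigenvector unitaries
`U` and `V`. Writing `Mₐ = Vᴴ Kₐ U`, the diagonal of `Vᴴ (Φ ρ) V` gives `q = B p` with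
`Bᵢⱼ = ∑ₐ |(Mₐ)ᵢⱼ|²`. The row sums of `B` are the diagonal of `∑ₐ Mₐ Mₐᴴ = Vᴴ Φ(1) V = 1`
(unitality) and its column sums the diagonal of `∑ₐ Mₐᴴ Mₐ = 1` (trace preservation), so `B` is
doubly stochastic. Jensen's inequality for the concave `η x = -x log x` along each row of `B`,
summed using the column sums, gives `∑ⱼ η(pⱼ) ≤ ∑ᵢ η(qᵢ)`.
-/

open Matrix
open scoped ComplexOrder

/-- Von Neumann entropy of a matrix (junk value `0` if the matrix is not Hermitian). -/
noncomputable def vnEntropy {n : Type*} [Fintype n] [DecidableEq n]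
    (A : Matrix n n ℂ) : ℝ :=
  if h : A.IsHermitian then ∑ i, Real.negMulLog (h.eigenvalues i) else 0

open Finset

theorem ConcaveOn.sum_le_sum_mulVec_of_mem_doublyStochastic {n : Type*} [Fintype n]
    [DecidableEq n] {s : Set ℝ} {f : ℝ → ℝ} (hf : ConcaveOn ℝ s f) {B : Matrix n n ℝ}
    (hB : B ∈ doublyStochastic ℝ n) {p : n → ℝ} (hp : ∀ j, p j ∈ s) :
    ∑ j, f (p j) ≤ ∑ i, f ((B *ᵥ p) i) :=
  calc ∑ j, f (p j) = ∑ j, (∑ i, B i j) • f (p j) := by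
        simp only [sum_col_of_mem_doublyStochastic hB, one_smul]
    _ = ∑ i, ∑ j, B i j • f (p j) := by
        simp only [sum_smul]
        exact sum_comm
    _ ≤ ∑ i, f ((B *ᵥ p) i) := sum_le_sum fun i _ =>
        hf.le_map_sum (fun j _ => nonneg_of_mem_doublyStochastic hB)
          (sum_row_of_mem_doublyStochastic hB i) (fun j _ => hp j)

section KrausWeights

variable {ι m n : Type*} [Fintype ι]

def krausWeights (M : ι → Matrix m n ℂ) : Matrix m n ℝ :=
  of fun i j => ∑ a, Complex.normSq (M a i j)

theorem krausWeights_transpose (M : ι → Matrix m n ℂ) :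
    (krausWeights M)ᵀ = krausWeights fun a => (M a)ᴴ := by
  ext i j
  simp [krausWeights]

variable [Fintype n]

theorem sum_mul_mul_conjTranspose_conj (K : ι → Matrix n n ℂ) (ρ U V : Matrix n n ℂ) :
    Vᴴ * (∑ a, K a * (U * ρ * Uᴴ) * (K a)ᴴ) * V
      = ∑ a, (Vᴴ * K a * U) * ρ * (Vᴴ * K a * U)ᴴ := by
  rw [mul_sum, sum_mul]
  refine sum_congr rfl fun a _ => ?_
  simp only [conjTranspose_mul, conjTranspose_conjTranspose, Matrix.mul_assoc]

variable [DecidableEq n]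

theorem mul_diagonal_mul_conjTranspose_apply_self (M : Matrix m n ℂ) (p : n → ℝ) (i : m) :
    (M * diagonal (Complex.ofReal ∘ p) * Mᴴ) i i = ∑ j, (Complex.normSq (M i j) * p j : ℝ) := by
  push_cast
  rw [mul_apply]
  simp only [mul_diagonal, conjTranspose_apply, RCLike.star_def, Function.comp_apply]
  refine sum_congr rfl fun j _ => ?_
  rw [Complex.normSq_eq_conj_mul_self]
  ring

theorem sum_mul_diagonal_mul_conjTranspose_apply_self (M : ι → Matrix m n ℂ) (p : n → ℝ)
    (i : m) :
    (∑ a, M a * diagonal (Complex.ofReal ∘ p) * (M a)ᴴ) i i = (krausWeights M *ᵥ p) i := by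
  simp only [Matrix.sum_apply, mul_diagonal_mul_conjTranspose_apply_self, krausWeights, mulVec,
    dotProduct, of_apply, sum_mul]
  push_cast
  exact sum_comm

theorem krausWeights_mulVec_one [DecidableEq m] (M : ι → Matrix m n ℂ)
    (h : ∑ a, M a * (M a)ᴴ = 1) :
    krausWeights M *ᵥ 1 = 1 := by
  ext i
  have hdiag := sum_mul_diagonal_mul_conjTranspose_apply_self M 1 i
  simp only [Function.comp_def, Pi.one_apply, Complex.ofReal_one, diagonal_one, Matrix.mul_one,
    h, one_apply_eq] at hdiag
  exact_mod_cast hdiag.symm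

theorem krausWeights_mem_doublyStochastic (M : ι → Matrix n n ℂ)
    (htp : ∑ a, (M a)ᴴ * M a = 1) (hunital : ∑ a, M a * (M a)ᴴ = 1) :
    krausWeights M ∈ doublyStochastic ℝ n := by
  refine mem_doublyStochastic.2 ⟨fun i j => sum_nonneg fun a _ => Complex.normSq_nonneg _,
    krausWeights_mulVec_one M hunital, ?_⟩
  rw [← mulVec_transpose, krausWeights_transpose, krausWeights_mulVec_one]
  simpa using htp

theorem sum_mul_conjTranspose_conj (K : ι → Matrix n n ℂ) {U : Matrix n n ℂ}
    (hU : U ∈ unitaryGroup n ℂ) (V : Matrix n n ℂ) :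
    ∑ a, (Vᴴ * K a * U) * (Vᴴ * K a * U)ᴴ = Vᴴ * (∑ a, K a * (K a)ᴴ) * V := by
  rw [mul_sum, sum_mul]
  refine sum_congr rfl fun a _ => ?_
  rw [mem_unitaryGroup_iff, star_eq_conjTranspose] at hU
  simp only [conjTranspose_mul, conjTranspose_conjTranspose, Matrix.mul_assoc]
  rw [← Matrix.mul_assoc U, hU, Matrix.one_mul]

theorem sum_conjTranspose_mul_conj (K : ι → Matrix n n ℂ) (U : Matrix n n ℂ)
    {V : Matrix n n ℂ} (hV : V ∈ unitaryGroup n ℂ) :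
    ∑ a, (Vᴴ * K a * U)ᴴ * (Vᴴ * K a * U) = Uᴴ * (∑ a, (K a)ᴴ * K a) * U := by
  simpa [Matrix.mul_assoc] using sum_mul_conjTranspose_conj (fun a => (K a)ᴴ) hV U

theorem exists_mem_doublyStochastic_eigenvalues_eq_mulVec (K : ι → Matrix n n ℂ)
    (htp : ∑ a, (K a)ᴴ * K a = 1) (hunital : ∑ a, K a * (K a)ᴴ = 1)
    {ρ : Matrix n n ℂ} (hρ : ρ.IsHermitian) (hσ : (∑ a, K a * ρ * (K a)ᴴ).IsHermitian) :
    ∃ B ∈ doublyStochastic ℝ n, hσ.eigenvalues = B *ᵥ hρ.eigenvalues := by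
  set U := hρ.eigenvectorUnitary
  set V := hσ.eigenvectorUnitary
  have hU : ρ = U * diagonal (Complex.ofReal ∘ hρ.eigenvalues) * (U : Matrix n n ℂ)ᴴ :=
    hρ.spectral_theorem
  have hV : (V : Matrix n n ℂ)ᴴ * (∑ a, K a * ρ * (K a)ᴴ) * V
      = diagonal (Complex.ofReal ∘ hσ.eigenvalues) :=
    (Unitary.conjStarAlgAut_star_apply (S := ℂ) _ _).symm.trans
      hσ.conjStarAlgAut_star_eigenvectorUnitary
  refine ⟨krausWeights fun a => (V : Matrix n n ℂ)ᴴ * K a * U,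
    krausWeights_mem_doublyStochastic _ ?_ ?_, ?_⟩
  · rw [sum_conjTranspose_mul_conj K U V.2, htp, Matrix.mul_one, ← star_eq_conjTranspose,
      Unitary.coe_star_mul_self]
  · rw [sum_mul_conjTranspose_conj K U.2 V, hunital, Matrix.mul_one, ← star_eq_conjTranspose,
      Unitary.coe_star_mul_self]
  · ext i
    apply Complex.ofReal_injective
    rw [← sum_mul_diagonal_mul_conjTranspose_apply_self, ← sum_mul_mul_conjTranspose_conj, ← hU,
      hV, diagonal_apply_eq, Function.comp_apply]

end KrausWeights

theorem vnEntropy_of_isHermitian {n : Type*} [Fintype n] [DecidableEq n] {A : Matrix n n ℂ}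
    (hA : A.IsHermitian) :
    vnEntropy A = ∑ i, Real.negMulLog (hA.eigenvalues i) :=
  dif_pos hA

theorem stmt_5_general {n ι : Type*} [Fintype n] [DecidableEq n] [Fintype ι]
    (K : ι → Matrix n n ℂ)
    (htp : ∑ a, (K a).conjTranspose * K a = 1)
    (hunital : ∑ a, K a * (K a).conjTranspose = 1)
    (ρ : Matrix n n ℂ) (hρ : ρ.PosSemidef) :
    vnEntropy ρ ≤ vnEntropy (∑ a, K a * ρ * (K a).conjTranspose) := by
  have hσ : (∑ a, K a * ρ * (K a)ᴴ).IsHermitian :=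
    isSelfAdjoint_sum _ fun a _ => isHermitian_mul_mul_conjTranspose (K a) hρ.1
  obtain ⟨B, hB, hσB⟩ := exists_mem_doublyStochastic_eigenvalues_eq_mulVec K htp hunital hρ.1 hσ
  rw [vnEntropy_of_isHermitian hρ.1, vnEntropy_of_isHermitian hσ, hσB]
  exact Real.concaveOn_negMulLog.sum_le_sum_mulVec_of_mem_doublyStochastic hB
    hρ.eigenvalues_nonneg

/-- A unital CPTP map (given by Kraus operators) does not decrease the von Neumann entropy. -/
theorem stmt_5 {n ι : Type*} [Fintype n] [DecidableEq n] [Nonempty n] [Fintype ι]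
    (K : ι → Matrix n n ℂ)
    (htp : ∑ a, (K a).conjTranspose * K a = 1)
    (hunital : ∑ a, K a * (K a).conjTranspose = 1)
    (ρ : Matrix n n ℂ) (hρ : ρ.PosSemidef) (htr : ρ.trace = 1) :
    vnEntropy ρ ≤ vnEntropy (∑ a, K a * ρ * (K a).conjTranspose) :=
  stmt_5_general K htp hunital ρ hρ
end

section
/- The function f(x, y) = (x²/y) · Φ(x/y)⁻² is concave on the domain {(x, y) : x ≥ 0, y > 0}, where Φ is the inverse of z ↦ z tanh(z) on [0, ∞). -/
/-
With `u = x / y` and `w = Φ u` (so `u = w tanh w`), one has `f (x, y) = y · k (x / y)` for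
`k u = tanh² (Φ u)`, the perspective of `k`; perspectives of concave functions are concave.
The function `k` is concave since `dk/du = 2 / (cosh² w + w / tanh w)` decreases in `w` while
`w ↦ u` increases: the tangent-line inequality `k u ≤ k u₀ + k'(u₀) (u - u₀)` follows because
`w ↦ k'(u₀) · w tanh w - tanh² w` has derivative changing sign only at `w = Φ u₀`.
-/

open Set Real

theorem concaveOn_of_forall_exists_le_add_linear {E : Type*} [AddCommGroup E] [Module ℝ E]
    {s : Set E} {k : E → ℝ} (hs : Convex ℝ s)
    (hk : ∀ x ∈ s, ∃ ℓ : E →ₗ[ℝ] ℝ, ∀ y ∈ s, k y ≤ k x + ℓ (y - x)) :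
    ConcaveOn ℝ s k := by
  refine ⟨hs, fun x hx y hy a b ha hb hab => ?_⟩
  obtain ⟨ℓ, hℓ⟩ := hk _ (hs hx hy ha hb hab)
  have hbal : a * ℓ (x - (a • x + b • y)) + b * ℓ (y - (a • x + b • y)) = 0 := by
    rw [← smul_eq_mul, ← smul_eq_mul, ← map_smul, ← map_smul, ← map_add]
    convert ℓ.map_zero using 2
    rw [show a • (x - (a • x + b • y)) + b • (y - (a • x + b • y))
      = (a • x + b • y) - (a + b) • (a • x + b • y) by module, hab, one_smul, sub_self]
  calc a • k x + b • k y
      ≤ a * (k (a • x + b • y) + ℓ (x - (a • x + b • y)))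
        + b * (k (a • x + b • y) + ℓ (y - (a • x + b • y))) :=
        add_le_add (mul_le_mul_of_nonneg_left (hℓ x hx) ha)
          (mul_le_mul_of_nonneg_left (hℓ y hy) hb)
    _ = k (a • x + b • y) := by linear_combination k (a • x + b • y) * hab + hbal

theorem ConcaveOn.perspective {E : Type*} [AddCommGroup E] [Module ℝ E]
    {s : Set E} {k : E → ℝ} (hk : ConcaveOn ℝ s k) :
    ConcaveOn ℝ {p : E × ℝ | 0 < p.2 ∧ p.2⁻¹ • p.1 ∈ s} (fun p => p.2 * k (p.2⁻¹ • p.1)) := by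
  set D : Set (E × ℝ) := {p | 0 < p.2 ∧ p.2⁻¹ • p.1 ∈ s}
  have key : ∀ p ∈ D, ∀ q ∈ D, ∀ a b : ℝ, 0 ≤ a → 0 ≤ b → a + b = 1 →
      0 < (a • p + b • q).2 ∧ (a • p + b • q).2⁻¹ • (a • p + b • q).1 ∈ s ∧
      a * (p.2 * k (p.2⁻¹ • p.1)) + b * (q.2 * k (q.2⁻¹ • q.1)) ≤
        (a • p + b • q).2 * k ((a • p + b • q).2⁻¹ • (a • p + b • q).1) := by
    rintro ⟨x, t⟩ ⟨ht, hx⟩ ⟨y, u⟩ ⟨hu, hy⟩ a b ha hb hab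
    simp only [Prod.fst_add, Prod.snd_add, Prod.smul_fst, Prod.smul_snd, smul_eq_mul] at *
    have hm : 0 < a * t + b * u := by simpa using convex_Ioi (0 : ℝ) ht hu ha hb hab
    set α := a * t / (a * t + b * u)
    set β := b * u / (a * t + b * u)
    have hα : 0 ≤ α := by positivity
    have hβ : 0 ≤ β := by positivity
    have hαβ : α + β = 1 := by rw [← add_div, div_self hm.ne']
    have hcomb : (a * t + b * u)⁻¹ • (a • x + b • y) = α • (t⁻¹ • x) + β • (u⁻¹ • y) := by
      simp only [smul_smul, smul_add, α, β]
      congr 2 <;> field_simp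
    rw [hcomb]
    refine ⟨hm, hk.1 hx hy hα hβ hαβ, ?_⟩
    have := hk.2 hx hy hα hβ hαβ
    calc a * (t * k (t⁻¹ • x)) + b * (u * k (u⁻¹ • y))
        = (a * t + b * u) * (α * k (t⁻¹ • x) + β * k (u⁻¹ • y)) := by
          simp only [α, β]; field_simp
      _ ≤ _ := mul_le_mul_of_nonneg_left (by simpa using this) hm.le
  refine ⟨fun p hp q hq a b ha hb hab => ?_,
    fun p hp q hq a b ha hb hab => (key p hp q hq a b ha hb hab).2.2⟩
  obtain ⟨hpos, hmem, -⟩ := key p hp q hq a b ha hb hab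
  exact ⟨hpos, hmem⟩

theorem le_add_mul_sub_of_hasDerivAt_eq_mul {a z w : ℝ} {g h g' r : ℝ → ℝ}
    (hgc : ContinuousOn g (Ici a)) (hhc : ContinuousOn h (Ici a))
    (hg : ∀ x ∈ Ioi a, HasDerivAt g (g' x) x) (hh : ∀ x ∈ Ioi a, HasDerivAt h (r x * g' x) x)
    (hg'0 : ∀ x ∈ Ioi a, 0 ≤ g' x) (hr : AntitoneOn r (Ioi a)) (hz : a < z) (hw : a ≤ w) :
    h w ≤ h z + r z * (g w - g z) := by
  set F : ℝ → ℝ := fun x => r z * g x - h x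
  have hFc : ContinuousOn F (Ici a) := (continuousOn_const.mul hgc).sub hhc
  have hF : ∀ x ∈ Ioi a, HasDerivAt F ((r z - r x) * g' x) x := fun x hx =>
    (((hg x hx).const_mul (r z)).sub (hh x hx)).congr_deriv (by ring)
  suffices F z ≤ F w by simp only [F] at this; linarith
  rcases le_total z w with hzw | hwz
  · refine monotoneOn_of_hasDerivWithinAt_nonneg (f' := fun x => (r z - r x) * g' x)
      (convex_Icc z w) (hFc.mono (Icc_subset_Ici_self.trans (Ici_subset_Ici.2 hz.le)))
      (fun x hx => ?_) (fun x hx => ?_)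
      (left_mem_Icc.2 hzw) (right_mem_Icc.2 hzw) hzw
    · rw [interior_Icc] at hx
      exact (hF x (hz.trans hx.1)).hasDerivWithinAt
    · rw [interior_Icc] at hx
      exact mul_nonneg (sub_nonneg.2 (hr hz (hz.trans hx.1) hx.1.le)) (hg'0 x (hz.trans hx.1))
  · refine antitoneOn_of_hasDerivWithinAt_nonpos (f' := fun x => (r z - r x) * g' x)
      (convex_Icc w z) (hFc.mono (Icc_subset_Ici_self.trans (Ici_subset_Ici.2 hw)))
      (fun x hx => ?_) (fun x hx => ?_)
      (left_mem_Icc.2 hwz) (right_mem_Icc.2 hwz) hwz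
    · rw [interior_Icc] at hx
      exact (hF x (hw.trans_lt hx.1)).hasDerivWithinAt
    · rw [interior_Icc] at hx
      exact mul_nonpos_of_nonpos_of_nonneg
        (sub_nonpos.2 (hr (hw.trans_lt hx.1) hz hx.2.le)) (hg'0 x (hw.trans_lt hx.1))

theorem Real.hasDerivAt_tanh (x : ℝ) : HasDerivAt tanh (1 / cosh x ^ 2) x := by
  have hc : cosh x ≠ 0 := (cosh_pos x).ne'
  rw [show tanh = fun x => sinh x / cosh x from funext tanh_eq_sinh_div_cosh]
  refine ((hasDerivAt_sinh x).div (hasDerivAt_cosh x) hc).congr_deriv ?_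
  rw [← sq, ← sq, cosh_sq]
  ring

theorem Real.continuous_tanh : Continuous tanh :=
  continuous_iff_continuousAt.2 fun x => (hasDerivAt_tanh x).continuousAt

theorem Real.tanh_pos {x : ℝ} (hx : 0 < x) : 0 < tanh x := by
  rw [tanh_eq_sinh_div_cosh]
  exact div_pos (sinh_pos_iff.2 hx) (cosh_pos x)

theorem Real.tanh_nonneg {x : ℝ} (hx : 0 ≤ x) : 0 ≤ tanh x := by
  rw [tanh_eq_sinh_div_cosh]
  exact div_nonneg (sinh_nonneg_iff.2 hx) (cosh_pos x).le

theorem Real.tanh_le_self {x : ℝ} (hx : 0 ≤ x) : tanh x ≤ x := by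
  have hmono : MonotoneOn (fun x => x - tanh x) (Ici 0) := by
    refine monotoneOn_of_hasDerivWithinAt_nonneg (f' := fun x => 1 - 1 / cosh x ^ 2)
      (convex_Ici 0)
      (continuous_id.sub continuous_tanh).continuousOn
      (fun x _ => ((hasDerivAt_id x).sub (hasDerivAt_tanh x)).hasDerivWithinAt)
      (fun x _ => sub_nonneg.2 (div_le_one_of_le₀ (one_le_pow₀ (one_le_cosh x)) (by positivity)))
  simpa using hmono self_mem_Ici hx hx

theorem Real.self_le_sinh_mul_cosh {x : ℝ} (hx : 0 ≤ x) : x ≤ sinh x * cosh x := by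
  have := self_le_sinh_iff.2 (by positivity : 0 ≤ 2 * x)
  rw [sinh_two_mul] at this
  linarith

theorem Real.cosh_le_two_mul_sinh {x : ℝ} (hx : 1 ≤ x) : cosh x ≤ 2 * sinh x := by
  have hs : 1 ≤ sinh x := hx.trans (self_le_sinh_iff.2 (by linarith))
  nlinarith [cosh_sq x, cosh_pos x]

theorem monotoneOn_cosh_sq : MonotoneOn (fun x => cosh x ^ 2) (Ici 0) := fun x hx y hy hxy => by
  have hcosh : cosh x ≤ cosh y :=
    cosh_le_cosh.2 (by rwa [abs_of_nonneg hx, abs_of_nonneg (le_trans hx hxy)])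
  exact pow_le_pow_left₀ (cosh_pos x).le hcosh 2

theorem monotoneOn_div_tanh : MonotoneOn (fun x => x / tanh x) (Ioi 0) := by
  refine monotoneOn_of_hasDerivWithinAt_nonneg
    (f' := fun x => (1 * tanh x - x * (1 / cosh x ^ 2)) / tanh x ^ 2) (convex_Ioi 0)
    (fun x hx => ((hasDerivAt_id x).div (hasDerivAt_tanh x)
      (tanh_pos hx).ne').continuousAt.continuousWithinAt)
    (fun x hx => ?_) (fun x hx => ?_) <;> rw [interior_Ioi] at hx
  · exact ((hasDerivAt_id x).div (hasDerivAt_tanh x) (tanh_pos hx).ne').hasDerivWithinAt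
  · have hc : 0 < cosh x ^ 2 := by positivity
    refine div_nonneg (sub_nonneg.2 ?_) (sq_nonneg _)
    rw [one_mul, mul_one_div, tanh_eq_sinh_div_cosh, div_le_div_iff₀ hc (cosh_pos x)]
    nlinarith [self_le_sinh_mul_cosh hx.le, cosh_pos x]

/-- `dk/du` at `u = x tanh x`, where `k u = tanh (Φ u) ^ 2`. -/
noncomputable def tanhSqSlope (x : ℝ) : ℝ := 2 / (cosh x ^ 2 + x / tanh x)

theorem antitoneOn_tanhSqSlope : AntitoneOn tanhSqSlope (Ioi 0) := fun x hx y hy hxy => by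
  have hpos : 0 < cosh x ^ 2 + x / tanh x := by
    have := tanh_pos hx; have : (0 : ℝ) < x := hx; positivity
  exact div_le_div_of_nonneg_left zero_le_two hpos
    (add_le_add (monotoneOn_cosh_sq (Ioi_subset_Ici_self hx) (Ioi_subset_Ici_self hy) hxy)
      (monotoneOn_div_tanh hx hy hxy))

theorem hasDerivAt_tanh_sq {x : ℝ} (hx : 0 < x) :
    HasDerivAt (fun x => tanh x ^ 2) (tanhSqSlope x * (tanh x + x / cosh x ^ 2)) x := by
  have ht := tanh_pos hx
  have hc := cosh_pos x
  refine ((hasDerivAt_tanh x).pow 2).congr_deriv ?_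
  unfold tanhSqSlope
  field_simp
  ring

theorem tanh_sq_le_add_tanhSqSlope_mul {z w : ℝ} (hz : 0 < z) (hw : 0 ≤ w) :
    tanh w ^ 2 ≤ tanh z ^ 2 + tanhSqSlope z * (w * tanh w - z * tanh z) :=
  le_add_mul_sub_of_hasDerivAt_eq_mul (g := fun x => x * tanh x) (h := fun x => tanh x ^ 2)
    (g' := fun x => tanh x + x / cosh x ^ 2)
    (continuous_id.mul continuous_tanh).continuousOn (continuous_tanh.pow 2).continuousOn
    (fun x _ => ((hasDerivAt_id' x).mul (hasDerivAt_tanh x)).congr_deriv (by ring))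
    (fun x hx => hasDerivAt_tanh_sq hx)
    (fun x hx => by have := tanh_pos hx; have : (0:ℝ) < x := hx; positivity)
    antitoneOn_tanhSqSlope hz hw

theorem exists_mul_tanh_eq {u : ℝ} (hu : 0 ≤ u) : ∃ w, 0 ≤ w ∧ w * tanh w = u := by
  have hb : u ≤ (2 * u + 1) * tanh (2 * u + 1) := by
    have hs := sinh_pos_iff.2 (by linarith : (0:ℝ) < 2 * u + 1)
    rw [tanh_eq_sinh_div_cosh, mul_div_assoc', le_div_iff₀ (cosh_pos _)]
    nlinarith [cosh_le_two_mul_sinh (by linarith : (1:ℝ) ≤ 2 * u + 1), cosh_pos (2 * u + 1)]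
  obtain ⟨w, hw, hwu⟩ := intermediate_value_Icc (by linarith : (0:ℝ) ≤ 2 * u + 1)
    (continuous_id.mul continuous_tanh).continuousOn
    (show u ∈ Icc (0 * tanh 0) _ by simpa using ⟨hu, hb⟩)
  exact ⟨w, hw.1, hwu⟩

theorem concaveOn_tanh_sq_comp {ψ : ℝ → ℝ} (hψ : ∀ z ∈ Ici (0 : ℝ), ψ (z * tanh z) = z) :
    ConcaveOn ℝ (Ici 0) (fun u => tanh (ψ u) ^ 2) := by
  refine concaveOn_of_forall_exists_le_add_linear (convex_Ici 0) fun u₀ hu₀ => ?_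
  obtain ⟨z, hz, rfl⟩ := exists_mul_tanh_eq hu₀
  -- `tanhSqSlope 0 = 2` through the junk value `0 / tanh 0 = 0`; the true slope at `u₀ = 0` is `1`
  refine ⟨(if z = 0 then 1 else tanhSqSlope z) • LinearMap.id, fun u hu => ?_⟩
  obtain ⟨w, hw, rfl⟩ := exists_mul_tanh_eq hu
  simp only [hψ z hz, hψ w hw, LinearMap.smul_apply, LinearMap.id_apply, smul_eq_mul]
  split_ifs with h0
  · subst h0
    simpa [sq] using mul_le_mul_of_nonneg_right (tanh_le_self hw) (tanh_nonneg hw)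
  · exact tanh_sq_le_add_tanhSqSlope_mul (lt_of_le_of_ne hz (Ne.symm h0)) hw

theorem sq_div_mul_inv_sq_of_mul_tanh_eq {x y w : ℝ} (hy : 0 < y) (hw : w * tanh w = x / y) :
    x ^ 2 / y * w⁻¹ ^ 2 = y * tanh w ^ 2 := by
  have hx : x = y * (w * tanh w) := by rw [hw]; field_simp
  rcases eq_or_ne w 0 with rfl | hw0
  · simp [hx]
  · rw [hx]; field_simp

theorem stmt_13_general (Φ : ℝ → ℝ)
    (hΦ : ∀ z ∈ Set.Ici (0 : ℝ), Φ (z * Real.tanh z) = z) :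
    ConcaveOn ℝ {q : ℝ × ℝ | 0 ≤ q.1 ∧ 0 < q.2}
      (fun q : ℝ × ℝ => q.1 ^ 2 / q.2 * (Φ (q.1 / q.2))⁻¹ ^ 2) := by
  have hS : {q : ℝ × ℝ | 0 < q.2 ∧ q.2⁻¹ • q.1 ∈ Ici 0} = {q | 0 ≤ q.1 ∧ 0 < q.2} := by
    ext q
    simp only [mem_ofPred_eq, mem_Ici, smul_eq_mul]
    constructor
    · rintro ⟨h2, h1⟩; exact ⟨(mul_nonneg_iff_of_pos_left (inv_pos.2 h2)).1 h1, h2⟩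
    · rintro ⟨h1, h2⟩; exact ⟨h2, mul_nonneg (inv_nonneg.2 h2.le) h1⟩
  have hf := (concaveOn_tanh_sq_comp hΦ).perspective
  rw [hS] at hf
  refine hf.congr fun q hq => ?_
  obtain ⟨w, hw, hwq⟩ := exists_mul_tanh_eq (div_nonneg hq.1 hq.2.le)
  simp only [smul_eq_mul, inv_mul_eq_div, ← hwq, hΦ w hw]
  exact (sq_div_mul_inv_sq_of_mul_tanh_eq hq.2 hwq).symm

/-- With `Φ` the inverse of `z ↦ z tanh z` on `[0,∞)`, the function
`f(x,y) = (x²/y) Φ(x/y)⁻²` is concave on `{(x,y) : x ≥ 0, y > 0}`. -/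
theorem stmt_13 (Φ : ℝ → ℝ)
    (hΦ0 : ∀ x ∈ Set.Ici (0 : ℝ), Φ x ∈ Set.Ici (0 : ℝ))
    (hΦ : ∀ z ∈ Set.Ici (0 : ℝ), Φ (z * Real.tanh z) = z) :
    ConcaveOn ℝ {q : ℝ × ℝ | 0 ≤ q.1 ∧ 0 < q.2}
      (fun q : ℝ × ℝ => q.1 ^ 2 / q.2 * (Φ (q.1 / q.2))⁻¹ ^ 2) :=
  stmt_13_general Φ hΦ
end

section
/- Cramér–Rao-type bound for pure states: let |Ψ_θ⟩ be a differentiable family of unit vectors, J a self-adjoint operator, ⟨J⟩_θ = ⟨Ψ_θ|J|Ψ_θ⟩, Var[J]_θ = ⟨Ψ_θ|(J − ⟨J⟩_θ)²|Ψ_θ⟩, and I_θ = 4(⟨∂_θΨ_θ|∂_θΨ_θ⟩ − |⟨Ψ_θ|∂_θΨ_θ⟩|²) the quantum Fisher information. Then (∂_θ⟨J⟩_θ)² ≤ I_θ · Var[J]_θ. -/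
/-!
Write `ψ = Ψ θ₀`, `c = ⟨J⟩_θ₀` and `u = (J - c) ψ`. Since `J` is Hermitian,
`∂_θ⟨J⟩ = 2 Re ⟨ψ, J ∂Ψ⟩`, and since `‖Ψ θ‖ = 1` for all `θ`, `Re ⟨ψ, ∂Ψ⟩ = 0`; together these give
`∂_θ⟨J⟩ = 2 Re ⟨u, ∂Ψ⟩`. As `u ⊥ ψ`, the component of `∂Ψ` along `ψ` can be removed, and
Cauchy–Schwarz bounds `(Re ⟨u, ∂Ψ⟩)²` by `‖u‖² (‖∂Ψ‖² - |⟨ψ, ∂Ψ⟩|²) = Var · I / 4`.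
-/

open RCLike

section InnerProductSpace
variable {𝕜 E : Type*} [RCLike 𝕜] [NormedAddCommGroup E] [InnerProductSpace 𝕜 E]
local notation "⟪" x ", " y "⟫" => inner 𝕜 x y

theorem ContinuousLinearMap.inner_mul_self_apply_of_isSymmetric {S : E →L[𝕜] E}
    (hS : (S : E →ₗ[𝕜] E).IsSymmetric) (x : E) : ⟪x, (S * S) x⟫ = (‖S x‖ ^ 2 : ℝ) :=
  ((hS.apply_clm x (S x)).symm.trans (inner_self_eq_norm_sq_to_K _)).trans (ofReal_pow _ _).symm

theorem re_inner_sq_le_of_inner_eq_zero {ψ u w : E} (hψ : ‖ψ‖ = 1) (hu : ⟪u, ψ⟫ = 0) :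
    re ⟪u, w⟫ ^ 2 ≤ ‖u‖ ^ 2 * (‖w‖ ^ 2 - ‖⟪ψ, w⟫‖ ^ 2) := by
  set v := w - ⟪ψ, w⟫ • ψ
  have huv : ⟪u, v⟫ = ⟪u, w⟫ := by simp [v, inner_sub_right, inner_smul_right, hu]
  have hv : ‖v‖ ^ 2 = ‖w‖ ^ 2 - ‖⟪ψ, w⟫‖ ^ 2 := by
    have : re ⟪w, ⟪ψ, w⟫ • ψ⟫ = ‖⟪ψ, w⟫‖ ^ 2 := by
      rw [inner_smul_right, ← inner_conj_symm w ψ, mul_conj, ← ofReal_pow, ofReal_re]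
    rw [norm_sub_sq (𝕜 := 𝕜), this, norm_smul, hψ]
    ring
  calc re ⟪u, w⟫ ^ 2 ≤ ‖⟪u, v⟫‖ ^ 2 := by
        rw [huv, ← sq_abs]
        exact pow_le_pow_left₀ (abs_nonneg _) (abs_re_le_norm _) 2
    _ ≤ (‖u‖ * ‖v‖) ^ 2 := pow_le_pow_left₀ (norm_nonneg _) (norm_inner_le_norm u v) 2
    _ = ‖u‖ ^ 2 * (‖w‖ ^ 2 - ‖⟪ψ, w⟫‖ ^ 2) := by rw [mul_pow, hv]

variable [NormedSpace ℝ E] [IsScalarTower ℝ 𝕜 E] {Φ : ℝ → E} {Φ' : E} {t : ℝ}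

theorem HasDerivAt.re_inner_map_self {T : E →L[𝕜] E} (hT : (T : E →ₗ[𝕜] E).IsSymmetric)
    (hΦ : HasDerivAt Φ Φ' t) :
    HasDerivAt (fun s => re ⟪Φ s, T (Φ s)⟫) (2 * re ⟪Φ t, T Φ'⟫) t := by
  have h := hΦ.inner 𝕜 (((T.restrictScalars ℝ).hasFDerivAt).comp_hasDerivAt t hΦ)
  refine ((reCLM : 𝕜 →L[ℝ] ℝ).hasFDerivAt.comp_hasDerivAt t h).congr_deriv ?_
  have hsym : re ⟪Φ', T (Φ t)⟫ = re ⟪Φ t, T Φ'⟫ := by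
    rw [inner_re_symm, ← ContinuousLinearMap.coe_coe T, hT]
  simp [hsym, two_mul]

theorem HasDerivAt.re_inner_eq_zero_of_norm_eq {c : ℝ} (hΦ : HasDerivAt Φ Φ' t)
    (hc : ∀ s, ‖Φ s‖ = c) : re ⟪Φ t, Φ'⟫ = 0 := by
  have h := hΦ.re_inner_map_self (T := ContinuousLinearMap.id 𝕜 E) LinearMap.IsSymmetric.id
  have hconst : HasDerivAt (fun s => re ⟪Φ s, Φ s⟫) 0 t := by
    simp_rw [inner_self_eq_norm_sq, hc]
    exact hasDerivAt_const t _
  simpa using h.unique hconst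

theorem quantum_cramer_rao {T : E →L[𝕜] E} (hT : (T : E →ₗ[𝕜] E).IsSymmetric)
    (hΦ : HasDerivAt Φ Φ' t) (hnorm : ∀ s, ‖Φ s‖ = 1) {d : ℝ}
    (hd : HasDerivAt (fun s => re ⟪Φ s, T (Φ s)⟫) d t) :
    d ^ 2 ≤ 4 * (‖Φ'‖ ^ 2 - ‖⟪Φ t, Φ'⟫‖ ^ 2) *
      re ⟪Φ t, ((T - (re ⟪Φ t, T (Φ t)⟫ : 𝕜) • 1) * (T - (re ⟪Φ t, T (Φ t)⟫ : 𝕜) • 1)) (Φ t)⟫ := by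
  set ψ := Φ t
  set c := re ⟪ψ, T ψ⟫
  set S := T - (c : 𝕜) • 1
  have hS : (S : E →ₗ[𝕜] E).IsSymmetric :=
    hT.sub (LinearMap.IsSymmetric.one.smul (conj_ofReal _))
  have hψ : ⟪ψ, ψ⟫ = 1 := by rw [inner_self_eq_norm_sq_to_K, hnorm, ofReal_one, one_pow]
  have hc : ⟪ψ, T ψ⟫ = c := (hT.coe_re_inner_self_apply ψ).symm
  have hSψ : ⟪S ψ, ψ⟫ = 0 := by
    rw [sub_apply, smul_apply, one_apply_eq_self, inner_sub_left, inner_smul_left, hψ,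
      conj_ofReal, mul_one, hT.apply_clm, hc, sub_self]
  have hdS : d = 2 * re ⟪S ψ, Φ'⟫ := by
    rw [hd.unique (hΦ.re_inner_map_self hT), sub_apply, smul_apply, one_apply_eq_self,
      inner_sub_left, inner_smul_left, conj_ofReal, map_sub, re_ofReal_mul,
      hΦ.re_inner_eq_zero_of_norm_eq hnorm, mul_zero, sub_zero, hT.apply_clm]
  rw [ContinuousLinearMap.inner_mul_self_apply_of_isSymmetric hS, ofReal_re, hdS]
  nlinarith [re_inner_sq_le_of_inner_eq_zero (w := Φ') (hnorm t) hSψ]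

end InnerProductSpace

open Matrix

theorem Matrix.star_dotProduct_eq_inner {𝕜 n : Type*} [RCLike 𝕜] [Fintype n] (x y : n → 𝕜) :
    star x ⬝ᵥ y = inner 𝕜 (WithLp.toLp 2 x : EuclideanSpace 𝕜 n) (WithLp.toLp 2 y) :=
  dotProduct_comm _ _

theorem Matrix.star_dotProduct_mulVec_eq_inner {𝕜 n : Type*} [RCLike 𝕜] [Fintype n]
    [DecidableEq n] (x y : n → 𝕜) (M : Matrix n n 𝕜) :
    star x ⬝ᵥ M *ᵥ y = inner 𝕜 (WithLp.toLp 2 x : EuclideanSpace 𝕜 n)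
      (toEuclideanCLM (𝕜 := 𝕜) M (WithLp.toLp 2 y)) :=
  star_dotProduct_eq_inner x (M *ᵥ y)

/-- Quantum Cramér–Rao bound for a differentiable family of pure states:
`(∂_θ⟨J⟩_θ)² ≤ I_θ · Var[J]_θ`. -/
theorem stmt_16 {n : Type*} [Fintype n] [DecidableEq n]
    (Ψ : ℝ → n → ℂ) (θ₀ : ℝ) (dΨ : n → ℂ)
    (hd : ∀ i, HasDerivAt (fun θ => Ψ θ i) (dΨ i) θ₀)
    (hnorm : ∀ θ, star (Ψ θ) ⬝ᵥ Ψ θ = 1)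
    (J : Matrix n n ℂ) (hJ : J.IsHermitian)
    (avg : ℝ → ℝ)
    (havg : ∀ θ, avg θ = (star (Ψ θ) ⬝ᵥ J.mulVec (Ψ θ)).re)
    (Var I : ℝ)
    (hVar : Var = (star (Ψ θ₀) ⬝ᵥ
      (((J - (avg θ₀ : ℂ) • 1) * (J - (avg θ₀ : ℂ) • 1)).mulVec (Ψ θ₀))).re)
    (hI : I = 4 * ((star dΨ ⬝ᵥ dΨ).re - ‖star (Ψ θ₀) ⬝ᵥ dΨ‖ ^ 2)) :
    ∀ d : ℝ, HasDerivAt avg d θ₀ → d ^ 2 ≤ I * Var := by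
  intro d hd_avg
  set Φ : ℝ → EuclideanSpace ℂ n := fun θ => WithLp.toLp 2 (Ψ θ)
  set T := toEuclideanCLM (𝕜 := ℂ) J
  have hT : (T : EuclideanSpace ℂ n →ₗ[ℂ] EuclideanSpace ℂ n).IsSymmetric :=
    isSymmetric_toEuclideanLin_iff.mpr hJ
  have hΦ : HasDerivAt Φ (WithLp.toLp 2 dΨ) θ₀ :=
    (PiLp.hasFDerivAt_toLp (𝕜 := ℝ) 2 (Ψ θ₀)).comp_hasDerivAt θ₀ (hasDerivAt_pi.2 hd)
  have hΦnorm : ∀ θ, ‖Φ θ‖ = 1 := fun θ => by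
    have h := hnorm θ
    rw [star_dotProduct_eq_inner, inner_self_eq_norm_sq_to_K, ← ofReal_pow, ← ofReal_one,
      ofReal_inj] at h
    exact (pow_eq_one_iff_of_nonneg (norm_nonneg _) two_ne_zero).mp h
  have havgΦ : avg = fun θ => re (inner ℂ (Φ θ) (T (Φ θ))) :=
    funext fun θ => by rw [havg, star_dotProduct_mulVec_eq_inner]; rfl
  have hVarΦ : Var = re (inner ℂ (Φ θ₀)
      (((T - (avg θ₀ : ℂ) • 1) * (T - (avg θ₀ : ℂ) • 1)) (Φ θ₀))) := by
    rw [hVar, star_dotProduct_mulVec_eq_inner, map_mul, map_sub, map_smul, map_one]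
    rfl
  have hIΦ : I = 4 * (‖WithLp.toLp 2 dΨ‖ ^ 2 - ‖inner ℂ (Φ θ₀) (WithLp.toLp 2 dΨ)‖ ^ 2) := by
    rw [hI, star_dotProduct_eq_inner, star_dotProduct_eq_inner, inner_self_eq_norm_sq_to_K]
    norm_cast
  rw [hIΦ, hVarΦ, havgΦ]
  exact quantum_cramer_rao hT hΦ hΦnorm (havgΦ ▸ hd_avg)
end

section
/- For a differentiable two-parameter family of unit vectors |Ψ_θ⟩, the quantum Fisher information satisfies I_θ = 4 ∂²_{θ₁θ₂} ln|⟨Ψ_{θ₁}|Ψ_{θ₂}⟩| evaluated at θ₁ = θ₂ = θ, where I_θ = 4(⟨∂_θΨ_θ|∂_θΨ_θ⟩ − |⟨Ψ_θ|∂_θΨ_θ⟩|²). -/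
/-!
Near `θ₁ = θ` the overlap `⟨Ψ_{θ₁}|Ψ_θ⟩` is close to `1`, so the inner derivative of
`ln|⟨Ψ_{θ₁}|Ψ_{θ₂}⟩|` at `θ₂ = θ` is `Re[⟨Ψ_{θ₁}|∂Ψ_θ⟩ / ⟨Ψ_{θ₁}|Ψ_θ⟩]`. Differentiating this
quotient in `θ₁` at `θ` gives `Re[⟨∂Ψ_θ|∂Ψ_θ⟩ - ⟨Ψ_θ|∂Ψ_θ⟩⟨∂Ψ_θ|Ψ_θ⟩]`, and
`⟨∂Ψ_θ|Ψ_θ⟩ = conj ⟨Ψ_θ|∂Ψ_θ⟩`.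
-/

open Matrix Topology

theorem HasDerivAt.star_dotProduct {𝕜 n : Type*} [RCLike 𝕜] [Fintype n] {u v : ℝ → n → 𝕜}
    {u' v' : n → 𝕜} {x : ℝ} (hu : HasDerivAt u u' x) (hv : HasDerivAt v v' x) :
    HasDerivAt (fun t => star (u t) ⬝ᵥ v t) (star u' ⬝ᵥ v x + star (u x) ⬝ᵥ v') x := by
  simp only [dotProduct, Pi.star_apply, ← Finset.sum_add_distrib]
  exact HasDerivAt.fun_sum fun i _ => (hasDerivAt_pi.1 hu i).star.mul (hasDerivAt_pi.1 hv i)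

theorem HasDerivAt.complex_re {f : ℝ → ℂ} {f' : ℂ} {x : ℝ} (hf : HasDerivAt f f' x) :
    HasDerivAt (fun t => (f t).re) f'.re x :=
  Complex.reCLM.hasFDerivAt.comp_hasDerivAt x hf

theorem HasDerivAt.log_norm {f : ℝ → ℂ} {f' : ℂ} {x : ℝ} (hf : HasDerivAt f f' x)
    (hx : f x ≠ 0) : HasDerivAt (fun t => Real.log ‖f t‖) (f' / f x).re x := by
  have hsq : HasDerivAt (fun t => Real.log (‖f t‖ ^ 2) / 2)
      (2 * (f' * (starRingEnd ℂ) (f x)).re / ‖f x‖ ^ 2 / 2) x := by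
    simpa [Complex.inner] using (hf.norm_sq.log (by positivity)).div_const 2
  convert hsq using 1
  · funext t
    rw [Real.log_pow]
    ring
  · have : f' / f x = f' * (starRingEnd ℂ) (f x) / ((‖f x‖ ^ 2 : ℝ) : ℂ) := by
      rw [Complex.ofReal_pow, ← Complex.mul_conj', mul_div_mul_right _ _ ((map_ne_zero _).2 hx)]
    rw [this, Complex.div_ofReal_re]
    ring

theorem stmt_17_general {n : Type*} [Fintype n]
    (Ψ dΨ : ℝ → n → ℂ)
    (hd : ∀ θ i, HasDerivAt (fun t => Ψ t i) (dΨ θ i) θ)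
    (hnorm : ∀ θ, star (Ψ θ) ⬝ᵥ Ψ θ = 1)
    (θ : ℝ) :
    4 * ((star (dΨ θ) ⬝ᵥ dΨ θ).re - ‖star (Ψ θ) ⬝ᵥ dΨ θ‖ ^ 2)
      = 4 * deriv (fun a => deriv (fun b => Real.log ‖star (Ψ a) ⬝ᵥ Ψ b‖) θ) θ := by
  have hΨ : ∀ t, HasDerivAt Ψ (dΨ t) t := fun t => hasDerivAt_pi.2 (hd t)
  have hoverlap : HasDerivAt (fun a => star (Ψ a) ⬝ᵥ Ψ θ) (star (dΨ θ) ⬝ᵥ Ψ θ) θ := by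
    simpa using (hΨ θ).star_dotProduct (hasDerivAt_const θ (Ψ θ))
  have hoverlap_dΨ : HasDerivAt (fun a => star (Ψ a) ⬝ᵥ dΨ θ) (star (dΨ θ) ⬝ᵥ dΨ θ) θ := by
    simpa using (hΨ θ).star_dotProduct (hasDerivAt_const θ (dΨ θ))
  have hoverlap_ne : star (Ψ θ) ⬝ᵥ Ψ θ ≠ 0 := by simp [hnorm]
  have hinner : (fun a => deriv (fun b => Real.log ‖star (Ψ a) ⬝ᵥ Ψ b‖) θ)
      =ᶠ[𝓝 θ] fun a => (star (Ψ a) ⬝ᵥ dΨ θ / star (Ψ a) ⬝ᵥ Ψ θ).re := by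
    filter_upwards [hoverlap.continuousAt.eventually_ne hoverlap_ne] with a ha
    have hb : HasDerivAt (fun b => star (Ψ a) ⬝ᵥ Ψ b) (star (Ψ a) ⬝ᵥ dΨ θ) θ := by
      simpa using (hasDerivAt_const θ (Ψ a)).star_dotProduct (hΨ θ)
    exact (hb.log_norm ha).deriv
  rw [hinner.deriv_eq, (hoverlap_dΨ.fun_div hoverlap hoverlap_ne).complex_re.deriv, star_dotProduct (dΨ θ) (Ψ θ), hnorm]
  simp [Complex.sq_norm, Complex.normSq_apply]

/-- The quantum Fisher information of a twice-differentiable family of unit vectors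
equals `4 ∂²_{θ₁θ₂} ln|⟨Ψ_{θ₁}|Ψ_{θ₂}⟩|` evaluated at `θ₁ = θ₂ = θ`. -/
theorem stmt_17 {n : Type*} [Fintype n] [DecidableEq n]
    (Ψ dΨ ddΨ : ℝ → n → ℂ)
    (hd : ∀ θ i, HasDerivAt (fun t => Ψ t i) (dΨ θ i) θ)
    (hdd : ∀ θ i, HasDerivAt (fun t => dΨ t i) (ddΨ θ i) θ)
    (hnorm : ∀ θ, star (Ψ θ) ⬝ᵥ Ψ θ = 1)
    (θ : ℝ) :
    4 * ((star (dΨ θ) ⬝ᵥ dΨ θ).re - ‖star (Ψ θ) ⬝ᵥ dΨ θ‖ ^ 2)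
      = 4 * deriv (fun a => deriv (fun b => Real.log ‖star (Ψ a) ⬝ᵥ Ψ b‖) θ) θ :=
  stmt_17_general Ψ dΨ hd hnorm θ
end
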